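/- arXiv:1408.3327 — 4 statements merged into one kernel-verified Lean document; each statement's English description precedes it below -/
import Mathlib

section
/- Let T = {a : ℕ → K | ‖a n‖ → 0 as n → ∞} (the coefficient model of the Tate algebra K⟨T⟩ of the closed unit disk, a K-submodule of ℕ → K). The formal derivative operator D maps T into itself, and the quotient K-vector space T ⧸ (range of D restricted to T) is infinite-dimensional over K. (This is the paper's motivating observation: the first de Rham cohomology of a positive-dimensional smooth affinoid rigid space, computed with the usual non-overconvergent structure sheaf, is not finite dimensional.) -/
/-!
A Tate series `∑ aₙ Tⁿ` is the derivative of a Tate series only if its antiderivative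
coefficients `aₙ / (n + 1)` tend to zero. Since `‖p^m‖ → 0`, the derivative
`∑ₖ p^{mₖ} T^{p^{mₖ} - 1}` of the lacunary series `∑ₖ T^{p^{mₖ}}` is a Tate series, while its
antiderivative coefficients stay equal to `1`. Splitting the exponents into the infinitely many
disjoint infinite sets `{⟨j, k⟩ : k ∈ ℕ}` (`Nat.pair`) gives series `fⱼ` whose classes are
linearly independent: a relation `∑ gⱼ fⱼ = D b` forces `b (p^{⟨i, k⟩}) = gᵢ` for all `k`,
so `gᵢ = 0` since `b → 0`.
-/

open Filter Topology

/-- The coefficient model of the Tate algebra `K⟨T⟩` of the closed unit disk: sequences of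
coefficients tending to zero in norm.  It is a `K`-submodule of `ℕ → K`. -/
def TateDisk (K : Type*) [NormedField K] : Submodule K (ℕ → K) where
  carrier := {a | Tendsto (fun n : ℕ => ‖a n‖) atTop (𝓝 0)}
  zero_mem' := by
    simp
  add_mem' := by
    intro a b ha hb
    simp only [Set.mem_setOf_eq] at ha hb ⊢
    exact squeeze_zero (fun n => norm_nonneg _) (fun n => norm_add_le _ _)
      (by simpa using ha.add hb)
  smul_mem' := by
    intro c a ha
    simp only [Set.mem_setOf_eq] at ha ⊢
    simpa [norm_mul] using ha.const_mul ‖c‖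

/-- The formal derivative operator `f ↦ df/dT` on coefficient sequences:
`(D a) n = (n + 1) * a (n + 1)`. -/
def DerN (K : Type*) [NormedField K] : (ℕ → K) →ₗ[K] (ℕ → K) where
  toFun a := fun n => ((n + 1 : ℕ) : K) * a (n + 1)
  map_add' a b := by funext n; simp [mul_add]
  map_smul' c a := by
    funext n
    simp only [Pi.smul_apply, smul_eq_mul, RingHom.id_apply]
    ring

section

variable {K : Type*} [NormedField K]

lemma mem_TateDisk {a : ℕ → K} :
    a ∈ TateDisk K ↔ Tendsto (fun n => ‖a n‖) atTop (𝓝 0) := Iff.rfl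

lemma DerN_apply (a : ℕ → K) (n : ℕ) : DerN K a n = ((n + 1 : ℕ) : K) * a (n + 1) := rfl

lemma DerN_mem_TateDisk [IsUltrametricDist K] {a : ℕ → K} (ha : a ∈ TateDisk K) :
    DerN K a ∈ TateDisk K := by
  rw [mem_TateDisk] at ha ⊢
  refine squeeze_zero (fun n => norm_nonneg _) (fun n => ?_)
    (ha.comp (tendsto_add_atTop_nat 1))
  rw [DerN_apply, norm_mul]
  exact mul_le_of_le_one_left (norm_nonneg _) (IsUltrametricDist.norm_natCast_le_one K _)

lemma DerN_apply_succ_eq_of_DerN_eq [CharZero K] {a b : ℕ → K} (h : DerN K a = DerN K b)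
    (n : ℕ) : a (n + 1) = b (n + 1) := by
  have := congrFun h n
  rw [DerN_apply, DerN_apply] at this
  exact mul_left_cancel₀ (Nat.cast_ne_zero.mpr n.succ_ne_zero) this

lemma tendsto_natLog_atTop {p : ℕ} (hp : 1 < p) :
    Tendsto (fun n => Nat.log p n) atTop atTop :=
  tendsto_atTop_atTop_of_monotone' (fun _ _ => Nat.log_mono_right)
    (not_bddAbove_iff.mpr fun b => ⟨b + 1, ⟨p ^ (b + 1), Nat.log_pow hp _⟩, b.lt_succ_self⟩)

lemma DerN_mem_TateDisk_of_support_pow {p : ℕ} (hp : 1 < p) (hpK : ‖(p : K)‖ < 1)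
    {c : ℕ → K} (hc : ∀ n, ‖c n‖ ≤ 1) (hsupp : ∀ n, c n ≠ 0 → ∃ m, n = p ^ m) :
    DerN K c ∈ TateDisk K := by
  have hbound : ∀ n, ‖DerN K c n‖ ≤ ‖(p : K)‖ ^ Nat.log p (n + 1) := by
    intro n
    rw [DerN_apply, norm_mul]
    by_cases hcn : c (n + 1) = 0
    · rw [hcn, norm_zero, mul_zero]
      positivity
    · obtain ⟨m, hm⟩ := hsupp _ hcn
      rw [hm, Nat.log_pow hp, Nat.cast_pow, norm_pow]
      exact mul_le_of_le_one_right (by positivity) (hc _)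
  exact squeeze_zero (fun n => norm_nonneg _) hbound
    ((tendsto_pow_atTop_nhds_zero_of_lt_one (norm_nonneg _) hpK).comp
      ((tendsto_natLog_atTop hp).comp (tendsto_add_atTop_nat 1)))

noncomputable def lacunaryIndicator (K : Type*) [NormedField K] (p j : ℕ) : ℕ → K :=
  Set.indicator (Set.range fun k => p ^ Nat.pair j k) 1

lemma lacunaryIndicator_apply_pow_pair {p : ℕ} (hp : 1 < p) (i j k : ℕ) :
    lacunaryIndicator K p j (p ^ Nat.pair i k) = if i = j then 1 else 0 := by
  have hmem : p ^ Nat.pair i k ∈ Set.range (fun k => p ^ Nat.pair j k) ↔ i = j := by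
    simp only [Set.mem_range, (Nat.pow_right_injective hp).eq_iff, Nat.pair_eq_pair]
    exact ⟨fun ⟨_, hj, _⟩ => hj.symm, fun hij => ⟨k, hij.symm, rfl⟩⟩
  classical
  simp only [lacunaryIndicator, Set.indicator_apply, hmem, Pi.one_apply]

lemma DerN_lacunaryIndicator_mem_TateDisk {p : ℕ} (hp : 1 < p) (hpK : ‖(p : K)‖ < 1)
    (j : ℕ) : DerN K (lacunaryIndicator K p j) ∈ TateDisk K := by
  refine DerN_mem_TateDisk_of_support_pow hp hpK (fun n => ?_) (fun n hn => ?_)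
  · simpa [lacunaryIndicator] using norm_indicator_le_norm_self (1 : ℕ → K) n
  · obtain ⟨k, rfl⟩ := Set.mem_of_indicator_ne_zero hn
    exact ⟨_, rfl⟩

lemma sum_smul_lacunaryIndicator_apply_pow_pair {p : ℕ} (hp : 1 < p) (s : Finset ℕ)
    (g : ℕ → K) {i : ℕ} (hi : i ∈ s) (k : ℕ) :
    (∑ j ∈ s, g j • lacunaryIndicator K p j) (p ^ Nat.pair i k) = g i := by
  simp [Finset.sum_apply, lacunaryIndicator_apply_pow_pair hp, hi]

lemma eq_zero_of_DerN_sum_smul_lacunaryIndicator_mem [CharZero K] {p : ℕ} (hp : 1 < p)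
    {s : Finset ℕ} {g : ℕ → K}
    (hmem : DerN K (∑ j ∈ s, g j • lacunaryIndicator K p j) ∈ (TateDisk K).map (DerN K))
    {i : ℕ} (hi : i ∈ s) : g i = 0 := by
  obtain ⟨b, hb, hDb⟩ := hmem
  have hb_eq : ∀ k, b (p ^ Nat.pair i k) = g i := fun k => by
    obtain ⟨n, hn⟩ : ∃ n, p ^ Nat.pair i k = n + 1 :=
      Nat.exists_eq_add_one.mpr (Nat.pow_pos (by omega))
    rw [← sum_smul_lacunaryIndicator_apply_pow_pair hp s g hi k, hn]
    exact DerN_apply_succ_eq_of_DerN_eq hDb n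
  have hidx : Tendsto (fun k => p ^ Nat.pair i k) atTop atTop :=
    (tendsto_pow_atTop_atTop_of_one_lt hp).comp
      (tendsto_atTop_mono (Nat.right_le_pair i) tendsto_id)
  have hlim : Tendsto (fun _ : ℕ => ‖g i‖) atTop (𝓝 0) := by
    simpa only [Function.comp_def, hb_eq] using (mem_TateDisk.mp hb).comp hidx
  exact norm_eq_zero.mp (tendsto_const_nhds_iff.mp hlim)

end

/-- **The motivating observation of the paper**: the first de Rham cohomology of the closed rigid
unit disk, computed with the usual (non-overconvergent) structure sheaf, is not finite
dimensional.  Concretely: the formal derivative maps the Tate algebra into itself, and the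
quotient of the Tate algebra by the range of the derivative is an infinite-dimensional
`K`-vector space. -/
theorem tate_deRham_not_finiteDimensional
    (K : Type*) [NormedField K] [IsUltrametricDist K] [CharZero K]
    (p : ℕ) (hp : p.Prime) (hpK : ‖(p : K)‖ < 1) :
    (∀ a ∈ TateDisk K, DerN K a ∈ TateDisk K) ∧
      ¬ Module.Finite K
        ((TateDisk K) ⧸
          Submodule.comap (TateDisk K).subtype
            (Submodule.map (DerN K) (TateDisk K))) := by
  refine ⟨fun a ha => DerN_mem_TateDisk ha, fun hfin => ?_⟩
  set N := Submodule.comap (TateDisk K).subtype (Submodule.map (DerN K) (TateDisk K))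
  let f : ℕ → TateDisk K := fun j =>
    ⟨DerN K (lacunaryIndicator K p j), DerN_lacunaryIndicator_mem_TateDisk hp.one_lt hpK j⟩
  have hli : LinearIndependent K (N.mkQ ∘ f) := by
    rw [linearIndependent_iff']
    intro s g hsum i hi
    have hN : ∑ j ∈ s, g j • f j ∈ N := by
      rw [← Submodule.Quotient.mk_eq_zero, ← Submodule.mkQ_apply, map_sum]
      simpa only [map_smul, Function.comp_apply] using hsum
    have hD : DerN K (∑ j ∈ s, g j • lacunaryIndicator K p j) ∈ (TateDisk K).map (DerN K) := by
      simpa [N, f, map_sum, map_smul] using hN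
    exact eq_zero_of_DerN_sum_smul_lacunaryIndicator_mem hp.one_lt hD hi
  exact Module.Finite.not_linearIndependent_of_infinite _ hli
end

section
/- Let a : ℕ → K and let ρ be a real number with 0 < ρ such that ‖a n‖ · ρ^n → 0 as n → ∞. Then for every real ρ' with 0 < ρ' < ρ one has ‖a n / ((n + 1 : ℕ) : K)‖ · (ρ')^n → 0 as n → ∞. (Formal integration preserves overconvergent decay of coefficients, at the cost of an arbitrarily small shrinking of the radius; the point is that in a characteristic-zero ultrametric normed field the quantity ‖((n : ℕ) : K)⁻¹‖ grows at most polynomially in n.) -/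
/-!
On `ℚ` the norm of `K` restricts to an absolute value that is bounded on `ℕ` by the ultrametric
inequality, so by Ostrowski's theorem it is either trivial or a power `|·|_p ^ s` of a `p`-adic
norm. Since `|n|_p ≥ 1 / n`, this gives `‖(n : K)‖⁻¹ ≤ n ^ k` for some fixed `k`, and the
polynomial factor `(n + 1) ^ k` is absorbed by the geometric factor `(ρ' / ρ) ^ n`.
-/

open Filter Topology

theorem inv_natCast_le_padicNorm (p : ℕ) {n : ℕ} (hn : n ≠ 0) : (n : ℚ)⁻¹ ≤ padicNorm p n := by
  have hdvd : p ^ padicValNat p n ∣ n := pow_padicValNat_dvd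
  have hpos : 0 < n := Nat.pos_of_ne_zero hn
  rw [padicNorm.eq_zpow_of_nonzero (Nat.cast_ne_zero.mpr hn), padicValRat.of_nat, zpow_neg,
    zpow_natCast, ← Nat.cast_pow]
  exact inv_anti₀ (by exact_mod_cast Nat.pos_of_dvd_of_pos hdvd hpos)
    (by exact_mod_cast Nat.le_of_dvd hpos hdvd)

def ratCastAbsoluteValue (K : Type*) [NormedField K] [CharZero K] : AbsoluteValue ℚ ℝ :=
  (IsAbsoluteValue.toAbsoluteValue (norm : K → ℝ)).comp (Rat.castHom K).injective

@[simp]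
theorem ratCastAbsoluteValue_apply {K : Type*} [NormedField K] [CharZero K] (q : ℚ) :
    ratCastAbsoluteValue K q = ‖(q : K)‖ :=
  rfl

theorem exists_norm_natCast_inv_le_pow (K : Type*) [NormedField K] [IsUltrametricDist K]
    [CharZero K] :
    ∃ k : ℕ, ∀ n : ℕ, n ≠ 0 → ‖(n : K)‖⁻¹ ≤ (n : ℝ) ^ k := by
  set f := ratCastAbsoluteValue K
  by_cases hf : f.IsNontrivial
  case neg =>
    refine ⟨0, fun n hn => ?_⟩
    have hnorm : ‖(n : K)‖ = 1 := by
      simpa [f] using f.not_isNontrivial_apply hf (Nat.cast_ne_zero.mpr hn)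
    simp [hnorm]
  obtain ⟨p, ⟨_, hequiv⟩, -⟩ := Rat.AbsoluteValue.equiv_padic_of_bounded hf
    (fun n => by simpa [f] using IsUltrametricDist.norm_natCast_le_one K n)
  obtain ⟨c, hc, hfc⟩ := Rat.AbsoluteValue.exists_nat_rpow_iff_isEquiv.mpr hequiv
  refine ⟨⌈c⁻¹⌉₊, fun n hn => ?_⟩
  have hn1 : (1 : ℝ) ≤ n := by exact_mod_cast Nat.one_le_iff_ne_zero.mpr hn
  have hnorm : 0 < ‖(n : K)‖ := norm_pos_iff.mpr (Nat.cast_ne_zero.mpr hn)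
  have hpadic : (n : ℝ)⁻¹ ≤ ‖(n : K)‖ ^ c := by
    have hfcn := hfc n
    simp only [f, ratCastAbsoluteValue_apply, Rat.cast_natCast,
      Rat.AbsoluteValue.padic_eq_padicNorm] at hfcn
    rw [hfcn]
    have hℚ := (Rat.cast_le (K := ℝ)).mpr (inv_natCast_le_padicNorm p hn)
    rwa [Rat.cast_inv, Rat.cast_natCast] at hℚ
  calc ‖(n : K)‖⁻¹ = ((‖(n : K)‖ ^ c)⁻¹) ^ c⁻¹ := by
        rw [Real.inv_rpow (by positivity), ← Real.rpow_mul hnorm.le, mul_inv_cancel₀ hc.ne',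
          Real.rpow_one]
    _ ≤ (n : ℝ) ^ c⁻¹ := by
        gcongr
        exact inv_le_of_inv_le₀ (by positivity) hpadic
    _ ≤ (n : ℝ) ^ (⌈c⁻¹⌉₊ : ℝ) := Real.rpow_le_rpow_of_exponent_le hn1 (Nat.le_ceil _)
    _ = (n : ℝ) ^ ⌈c⁻¹⌉₊ := Real.rpow_natCast _ _

theorem tendsto_natCast_succ_pow_mul_pow_of_lt_one (k : ℕ) {r : ℝ} (hr₀ : 0 < r) (hr₁ : r < 1) :
    Tendsto (fun n : ℕ => ((n + 1 : ℕ) : ℝ) ^ k * r ^ n) atTop (𝓝 0) := by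
  have hshift := ((tendsto_pow_const_mul_const_pow_of_lt_one k hr₀.le hr₁).comp
    (tendsto_add_atTop_nat 1)).const_mul r⁻¹
  rw [mul_zero] at hshift
  refine hshift.congr fun n => ?_
  simp only [Function.comp_apply, pow_succ]
  field_simp

/-- **Formal integration preserves overconvergent decay of coefficients**, at the cost of an
arbitrarily small shrinking of the radius: if `‖a n‖ * ρ ^ n → 0` then
`‖a n / (n + 1)‖ * ρ' ^ n → 0` for every `0 < ρ' < ρ`. -/
theorem formal_integration_overconvergent
    {K : Type*} [NormedField K] [IsUltrametricDist K] [CharZero K]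
    (a : ℕ → K) (ρ : ℝ) (hρ : 0 < ρ)
    (h : Tendsto (fun n : ℕ => ‖a n‖ * ρ ^ n) atTop (𝓝 0))
    (ρ' : ℝ) (hρ'₀ : 0 < ρ') (hρ' : ρ' < ρ) :
    Tendsto (fun n : ℕ => ‖a n / ((n + 1 : ℕ) : K)‖ * ρ' ^ n) atTop (𝓝 0) := by
  obtain ⟨k, hk⟩ := exists_norm_natCast_inv_le_pow K
  set r := ρ' / ρ
  have hρ'_eq : ρ' = ρ * r := (mul_div_cancel₀ ρ' hρ.ne').symm
  have hbound := h.mul (tendsto_natCast_succ_pow_mul_pow_of_lt_one k (div_pos hρ'₀ hρ)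
    ((div_lt_one hρ).mpr hρ'))
  rw [mul_zero] at hbound
  refine squeeze_zero (fun n => by positivity) (fun n => ?_) hbound
  calc ‖a n / ((n + 1 : ℕ) : K)‖ * ρ' ^ n
      = (‖a n‖ * ρ ^ n) * (‖((n + 1 : ℕ) : K)‖⁻¹ * r ^ n) := by
        rw [norm_div, hρ'_eq, mul_pow, div_eq_mul_inv]; ring
    _ ≤ (‖a n‖ * ρ ^ n) * (((n + 1 : ℕ) : ℝ) ^ k * r ^ n) := by
        gcongr
        exact hk _ n.succ_ne_zero
end

section
/- Fix reals 0 < γ ≤ δ and let W† = {a : ℤ → K | there exist reals γ', δ' with 0 < γ' < γ and δ < δ' such that ‖a n‖ · (δ')^n → 0 as n → +∞ and ‖a n‖ · (γ')^n → 0 as n → −∞}, the coefficient model of the ring of overconvergent (dagger) functions on the closed annulus γ ≤ |T| ≤ δ. Then the formal derivative D maps W† into W†, an element a ∈ W† lies in the range of D : W† → W† if and only if a(−1) = 0, and the quotient K-vector space W† ⧸ range(D) is one-dimensional, spanned by the class of the indicator sequence of −1 (i.e. the class of the differential dT/T). (This is the n = r = 1 case of the paper's Lemma 2.1(a): H¹_dR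 of the dagger annulus is spanned by dT/T.) -/
/-!
`D` multiplies the coefficient `aₙ₊₁` by `n + 1`, and `‖n + 1‖ ≤ 1` in an ultrametric field, so `D`
preserves every decay condition; it also kills the coefficient at `-1`. Conversely, if
`a (-1) = 0` then `bₙ = aₙ₋₁ / n` is a preimage, and dividing by `n` costs only a polynomial
factor: by Ostrowski the norm on `ℚ ⊆ K` is trivial or a power of a `p`-adic one, so
`‖n‖⁻¹ ≤ nᵏ`. Shrinking the overconvergence radii slightly absorbs this factor. Hence `range D`
is the kernel of the residue functional `a ↦ a (-1)`, and the quotient is one-dimensional,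
spanned by the class of `dT/T`.
-/

open Filter Topology

private lemma zpow_le_zpow_base {x y : ℝ} (hx : 0 < x) (hxy : x ≤ y) {n : ℤ}
    (hn : 0 ≤ n) : x ^ n ≤ y ^ n := by
  lift n to ℕ using hn
  simpa [zpow_natCast] using pow_le_pow_left₀ hx.le hxy n

private lemma zpow_anti_base {x y : ℝ} (hx : 0 < x) (hxy : x ≤ y) {n : ℤ}
    (hn : n ≤ 0) : y ^ n ≤ x ^ n := by
  obtain ⟨m, rfl⟩ := Int.exists_eq_neg_ofNat hn
  rw [zpow_neg, zpow_neg, zpow_natCast, zpow_natCast]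
  exact inv_anti₀ (pow_pos hx m) (pow_le_pow_left₀ hx.le hxy m)

/-- The coefficient model of the ring of overconvergent (dagger) functions on the closed annulus
`γ ≤ |T| ≤ δ`: two-sided sequences `a : ℤ → K` admitting radii `0 < γ' < γ` and `δ' > δ` with
`‖a n‖ * δ'^n → 0` as `n → +∞` and `‖a n‖ * γ'^n → 0` as `n → −∞`.  It is a `K`-submodule of
`ℤ → K`. -/
def DaggerAnnulus (K : Type*) [NormedField K] (γ δ : ℝ) (hγ : 0 < γ) (hγδ : γ ≤ δ) :
    Submodule K (ℤ → K) where
  carrier := {a | ∃ γ' δ' : ℝ, 0 < γ' ∧ γ' < γ ∧ δ < δ' ∧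
    Tendsto (fun n : ℤ => ‖a n‖ * δ' ^ n) atTop (𝓝 0) ∧
    Tendsto (fun n : ℤ => ‖a n‖ * γ' ^ n) atBot (𝓝 0)}
  zero_mem' := by
    refine ⟨γ / 2, δ + 1, half_pos hγ, half_lt_self hγ, by linarith, ?_, ?_⟩ <;> simp
  add_mem' := by
    rintro a b ⟨ga, da, hga0, hga, hda, haT, haB⟩ ⟨gb, db, hgb0, hgb, hdb, hbT, hbB⟩
    have hδ0 : 0 < δ := lt_of_lt_of_le hγ hγδ
    have hg0 : 0 < max ga gb := lt_of_lt_of_le hga0 (le_max_left _ _)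
    have hd0 : 0 < min da db := lt_trans hδ0 (lt_min hda hdb)
    refine ⟨max ga gb, min da db, hg0, max_lt hga hgb, lt_min hda hdb, ?_, ?_⟩
    · have ha' : Tendsto (fun n : ℤ => ‖a n‖ * (min da db) ^ n) atTop (𝓝 0) := by
        refine squeeze_zero'
          (Eventually.of_forall fun n => mul_nonneg (norm_nonneg _) (zpow_nonneg hd0.le n))
          ?_ haT
        filter_upwards [eventually_ge_atTop (0 : ℤ)] with n hn
        exact mul_le_mul_of_nonneg_left
          (zpow_le_zpow_base hd0 (min_le_left _ _) hn) (norm_nonneg _)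
      have hb' : Tendsto (fun n : ℤ => ‖b n‖ * (min da db) ^ n) atTop (𝓝 0) := by
        refine squeeze_zero'
          (Eventually.of_forall fun n => mul_nonneg (norm_nonneg _) (zpow_nonneg hd0.le n))
          ?_ hbT
        filter_upwards [eventually_ge_atTop (0 : ℤ)] with n hn
        exact mul_le_mul_of_nonneg_left
          (zpow_le_zpow_base hd0 (min_le_right _ _) hn) (norm_nonneg _)
      refine squeeze_zero
        (fun n => mul_nonneg (norm_nonneg _) (zpow_nonneg hd0.le n))
        (fun n => ?_) (by simpa using ha'.add hb')
      have h3 : ‖(a + b) n‖ * (min da db) ^ n ≤ (‖a n‖ + ‖b n‖) * (min da db) ^ n :=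
        mul_le_mul_of_nonneg_right (norm_add_le _ _) (zpow_nonneg hd0.le n)
      simpa [add_mul] using h3
    · have ha' : Tendsto (fun n : ℤ => ‖a n‖ * (max ga gb) ^ n) atBot (𝓝 0) := by
        refine squeeze_zero'
          (Eventually.of_forall fun n => mul_nonneg (norm_nonneg _) (zpow_nonneg hg0.le n))
          ?_ haB
        filter_upwards [eventually_le_atBot (0 : ℤ)] with n hn
        exact mul_le_mul_of_nonneg_left
          (zpow_anti_base hga0 (le_max_left _ _) hn) (norm_nonneg _)
      have hb' : Tendsto (fun n : ℤ => ‖b n‖ * (max ga gb) ^ n) atBot (𝓝 0) := by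
        refine squeeze_zero'
          (Eventually.of_forall fun n => mul_nonneg (norm_nonneg _) (zpow_nonneg hg0.le n))
          ?_ hbB
        filter_upwards [eventually_le_atBot (0 : ℤ)] with n hn
        exact mul_le_mul_of_nonneg_left
          (zpow_anti_base hgb0 (le_max_right _ _) hn) (norm_nonneg _)
      refine squeeze_zero
        (fun n => mul_nonneg (norm_nonneg _) (zpow_nonneg hg0.le n))
        (fun n => ?_) (by simpa using ha'.add hb')
      have h3 : ‖(a + b) n‖ * (max ga gb) ^ n ≤ (‖a n‖ + ‖b n‖) * (max ga gb) ^ n :=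
        mul_le_mul_of_nonneg_right (norm_add_le _ _) (zpow_nonneg hg0.le n)
      simpa [add_mul] using h3
  smul_mem' := by
    rintro c a ⟨ga, da, hga0, hga, hda, haT, haB⟩
    exact ⟨ga, da, hga0, hga, hda,
      by simpa [norm_mul, mul_assoc] using haT.const_mul ‖c‖,
      by simpa [norm_mul, mul_assoc] using haB.const_mul ‖c‖⟩

/-- The formal derivative operator `f ↦ df/dT` on two-sided (Laurent) coefficient sequences:
`(D a) n = (n + 1) * a (n + 1)`. -/
def DerZ (K : Type*) [NormedField K] : (ℤ → K) →ₗ[K] (ℤ → K) where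
  toFun a := fun n => ((n + 1 : ℤ) : K) * a (n + 1)
  map_add' a b := by funext n; simp [mul_add]
  map_smul' c a := by
    funext n
    simp only [Pi.smul_apply, smul_eq_mul, RingHom.id_apply]
    ring

theorem inv_le_padicNorm_natCast (p : ℕ) [Fact p.Prime] {n : ℕ} (hn : n ≠ 0) :
    (n : ℚ)⁻¹ ≤ padicNorm p n := by
  have hp : (0 : ℚ) < p := mod_cast (Fact.out : p.Prime).pos
  have hpow : ((p ^ padicValNat p n : ℕ) : ℚ) ≤ n :=
    mod_cast Nat.le_of_dvd (Nat.pos_of_ne_zero hn) pow_padicValNat_dvd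
  rw [padicNorm.eq_zpow_of_nonzero (by exact_mod_cast hn), padicValRat.of_nat, zpow_neg,
    zpow_natCast]
  push_cast at hpow
  exact inv_anti₀ (by positivity) hpow

section IntegerNorms

variable (K : Type*) [NormedField K] [IsUltrametricDist K] [CharZero K]

theorem exists_inv_norm_natCast_le_pow : ∃ k : ℕ, ∀ n : ℕ, n ≠ 0 → ‖(n : K)‖⁻¹ ≤ (n : ℝ) ^ k := by
  let f : AbsoluteValue ℚ ℝ := (NormedField.toAbsoluteValue K).comp (Rat.castHom K).injective
  have hf (n : ℕ) : f n = ‖(n : K)‖ := congrArg norm (Rat.cast_natCast n)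
  by_cases hnt : f.IsNontrivial
  · obtain ⟨p, ⟨_, hequiv⟩, -⟩ := Rat.AbsoluteValue.equiv_padic_of_bounded hnt
      fun n => (hf n).trans_le (IsUltrametricDist.norm_natCast_le_one K n)
    obtain ⟨c, hc, hfc⟩ := Rat.AbsoluteValue.exists_nat_rpow_iff_isEquiv.mpr hequiv
    refine ⟨⌈c⁻¹⌉₊, fun n hn => ?_⟩
    have hn1 : (1 : ℝ) ≤ n := mod_cast Nat.one_le_iff_ne_zero.mpr hn
    have hpadic : (n : ℝ)⁻¹ ≤ ‖(n : K)‖ ^ c := by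
      rw [← hf, hfc n, Rat.AbsoluteValue.padic_eq_padicNorm]
      simpa using (Rat.cast_le (K := ℝ)).mpr (inv_le_padicNorm_natCast p hn)
    have hnorm : (n : ℝ) ^ (-c⁻¹) ≤ ‖(n : K)‖ := by
      rw [Real.rpow_neg (by positivity), ← Real.inv_rpow (by positivity)]
      simpa [← Real.rpow_mul (norm_nonneg _), hc.ne'] using
        Real.rpow_le_rpow (by positivity) hpadic (inv_nonneg.mpr hc.le)
    calc ‖(n : K)‖⁻¹ ≤ ((n : ℝ) ^ (-c⁻¹))⁻¹ := inv_anti₀ (by positivity) hnorm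
      _ = (n : ℝ) ^ c⁻¹ := by rw [Real.rpow_neg (by positivity), inv_inv]
      _ ≤ (n : ℝ) ^ (⌈c⁻¹⌉₊ : ℝ) := Real.rpow_le_rpow_of_exponent_le hn1 (Nat.le_ceil _)
      _ = (n : ℝ) ^ ⌈c⁻¹⌉₊ := Real.rpow_natCast _ _
  · refine ⟨0, fun n hn => ?_⟩
    rw [← hf, f.not_isNontrivial_apply hnt (by exact_mod_cast hn)]
    simp

theorem tendsto_inv_norm_intCast_mul_zpow_atTop {r : ℝ} (hr0 : 0 ≤ r) (hr1 : r < 1) :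
    Tendsto (fun n : ℤ => ‖(n : K)‖⁻¹ * r ^ n) atTop (𝓝 0) := by
  obtain ⟨k, hk⟩ := exists_inv_norm_natCast_le_pow K
  rw [← Nat.map_cast_int_atTop, tendsto_map'_iff]
  refine squeeze_zero' (Eventually.of_forall fun n =>
    mul_nonneg (inv_nonneg.mpr (norm_nonneg _)) (zpow_nonneg hr0 _)) ?_
    (tendsto_pow_const_mul_const_pow_of_lt_one k hr0 hr1)
  filter_upwards [eventually_ne_atTop 0] with n hn
  simpa using mul_le_mul_of_nonneg_right (hk n hn) (pow_nonneg hr0 n)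

theorem tendsto_inv_norm_intCast_mul_zpow_atBot {r : ℝ} (hr1 : 1 < r) :
    Tendsto (fun n : ℤ => ‖(n : K)‖⁻¹ * r ^ n) atBot (𝓝 0) := by
  have hr0 : 0 < r := one_pos.trans hr1
  refine ((tendsto_inv_norm_intCast_mul_zpow_atTop K (inv_nonneg.mpr hr0.le)
    (inv_lt_one_of_one_lt₀ hr1)).comp tendsto_neg_atBot_atTop).congr fun n => ?_
  simp [zpow_neg]

end IntegerNorms

section Derivative

variable {K : Type*} [NormedField K]

theorem derZ_apply (a : ℤ → K) (n : ℤ) : DerZ K a n = ((n + 1 : ℤ) : K) * a (n + 1) := rfl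

theorem derZ_apply_neg_one (a : ℤ → K) : DerZ K a (-1) = 0 := by
  simp [derZ_apply]

section Decay

variable {l : Filter ℤ} {a : ℤ → K} {ρ : ℝ}

theorem tendsto_norm_derZ_mul_zpow [IsUltrametricDist K] (hl : Tendsto (· + 1) l l) (hρ : 0 < ρ)
    (ha : Tendsto (fun n => ‖a n‖ * ρ ^ n) l (𝓝 0)) :
    Tendsto (fun n => ‖DerZ K a n‖ * ρ ^ n) l (𝓝 0) := by
  refine squeeze_zero (fun n => by positivity) (fun n => ?_)
    (by simpa using (ha.comp hl).const_mul ρ⁻¹)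
  calc ‖DerZ K a n‖ * ρ ^ n ≤ 1 * ‖a (n + 1)‖ * ρ ^ n := by
        rw [derZ_apply, norm_mul]
        gcongr
        exact IsUltrametricDist.norm_intCast_le_one K _
    _ = ρ⁻¹ * (‖a (n + 1)‖ * ρ ^ (n + 1)) := by
        rw [zpow_add_one₀ hρ.ne']
        field_simp

/-- At `n = 0` this is `0⁻¹ * a (-1) = 0`, so `D` undoes it exactly when `a (-1) = 0`. -/
def antiderivZ (a : ℤ → K) : ℤ → K := fun n => (n : K)⁻¹ * a (n - 1)

theorem derZ_antiderivZ [CharZero K] (ha : a (-1) = 0) : DerZ K (antiderivZ a) = a := by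
  funext n
  rw [derZ_apply, antiderivZ, add_sub_cancel_right]
  rcases eq_or_ne n (-1) with rfl | hn
  · simp [ha]
  · exact mul_inv_cancel_left₀ (by exact_mod_cast (by omega : n + 1 ≠ 0)) _

theorem tendsto_norm_antiderivZ_mul_zpow (hl : Tendsto (· - 1) l l) {ρ' : ℝ} (hρ' : ρ' ≠ 0)
    (hn : Tendsto (fun n : ℤ => ‖(n : K)‖⁻¹ * (ρ / ρ') ^ n) l (𝓝 0))
    (ha : Tendsto (fun n => ‖a n‖ * ρ' ^ n) l (𝓝 0)) :
    Tendsto (fun n => ‖antiderivZ a n‖ * ρ ^ n) l (𝓝 0) := by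
  have h := hn.mul ((ha.comp hl).mul_const ρ')
  rw [zero_mul] at h
  refine h.congr fun n => ?_
  simp only [Function.comp_apply, antiderivZ, norm_mul, norm_inv, div_zpow,
    zpow_sub_one₀ hρ']
  field_simp

end Decay

section DaggerAnnulus

variable {γ δ : ℝ} {hγ : 0 < γ} {hγδ : γ ≤ δ} {a : ℤ → K}

theorem mem_daggerAnnulus_of_eventually_eq_zero (h : ∀ᶠ n in cofinite, a n = 0) :
    a ∈ DaggerAnnulus K γ δ hγ hγδ := by
  rw [Int.cofinite_eq, eventually_sup] at h
  refine ⟨γ / 2, δ + 1, half_pos hγ, half_lt_self hγ, by linarith,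
    tendsto_const_nhds.congr' (h.2.mono fun n hn => ?_),
    tendsto_const_nhds.congr' (h.1.mono fun n hn => ?_)⟩ <;> simp [hn]

theorem derZ_mem_daggerAnnulus [IsUltrametricDist K] (ha : a ∈ DaggerAnnulus K γ δ hγ hγδ) :
    DerZ K a ∈ DaggerAnnulus K γ δ hγ hγδ := by
  obtain ⟨γ', δ', hγ'0, hγ'γ, hδδ', haT, haB⟩ := ha
  exact ⟨γ', δ', hγ'0, hγ'γ, hδδ',
    tendsto_norm_derZ_mul_zpow (tendsto_atTop_add_const_right _ 1 tendsto_id) (by linarith) haT,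
    tendsto_norm_derZ_mul_zpow (tendsto_atBot_add_const_right _ 1 tendsto_id) hγ'0 haB⟩

theorem antiderivZ_mem_daggerAnnulus [IsUltrametricDist K] [CharZero K]
    (ha : a ∈ DaggerAnnulus K γ δ hγ hγδ) : antiderivZ a ∈ DaggerAnnulus K γ δ hγ hγδ := by
  obtain ⟨γ', δ', hγ'0, hγ'γ, hδδ', haT, haB⟩ := ha
  have hδ'0 : 0 < δ' := by linarith
  refine ⟨(γ' + γ) / 2, (δ + δ') / 2, by linarith, by linarith, by linarith, ?_, ?_⟩
  · exact tendsto_norm_antiderivZ_mul_zpow (tendsto_atTop_add_const_right _ (-1) tendsto_id)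
      hδ'0.ne' (tendsto_inv_norm_intCast_mul_zpow_atTop K (div_nonneg (by linarith) hδ'0.le)
        ((div_lt_one hδ'0).mpr (by linarith))) haT
  · exact tendsto_norm_antiderivZ_mul_zpow (tendsto_atBot_add_const_right _ (-1) tendsto_id)
      hγ'0.ne' (tendsto_inv_norm_intCast_mul_zpow_atBot K
        ((one_lt_div hγ'0).mpr (by linarith))) haB

end DaggerAnnulus

end Derivative

section ResidueFunctional

variable {F M : Type*} [DivisionRing F] [AddCommGroup M] [Module F M] {φ : M →ₗ[F] F} {e : M}

theorem finrank_quotient_ker_eq_one (he : φ e ≠ 0) :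
    Module.finrank F (M ⧸ LinearMap.ker φ) = 1 := by
  rw [(φ.quotKerEquivOfSurjective (LinearMap.surjective fun h => he (by simp [h]))).finrank_eq,
    Module.finrank_self]

theorem span_singleton_mk_eq_top_of_ker (he : φ e ≠ 0) :
    Submodule.span F {(Submodule.Quotient.mk e : M ⧸ LinearMap.ker φ)} = ⊤ :=
  (finrank_eq_one_iff_of_nonzero _ (by simpa [Submodule.Quotient.mk_eq_zero] using he)).mp
    (finrank_quotient_ker_eq_one he)

end ResidueFunctional

/-- **`H¹_dR` of the closed dagger annulus is one-dimensional, spanned by `dT/T`** (the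
`n = r = 1` case of Lemma 2.1(a) of the paper): the formal derivative `D` maps the ring `W†` of
overconvergent functions on the annulus `γ ≤ |T| ≤ δ` into itself, an element `a ∈ W†` is in the
range of `D : W† → W†` if and only if its residue coefficient `a (-1)` vanishes, and the quotient
`W† ⧸ range D` is a one-dimensional `K`-vector space spanned by the class of the indicator
sequence of `-1` (the class of the differential `dT/T`). -/
theorem daggerAnnulus_deRham
    (K : Type*) [NormedField K] [IsUltrametricDist K] [CharZero K]
    (γ δ : ℝ) (hγ : 0 < γ) (hγδ : γ ≤ δ) :
    (∀ a ∈ DaggerAnnulus K γ δ hγ hγδ, DerZ K a ∈ DaggerAnnulus K γ δ hγ hγδ) ∧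
    (∀ a ∈ DaggerAnnulus K γ δ hγ hγδ,
      ((∃ b ∈ DaggerAnnulus K γ δ hγ hγδ, DerZ K b = a) ↔ a (-1) = 0)) ∧
    ∃ he : (fun n : ℤ => if n = -1 then (1 : K) else 0) ∈ DaggerAnnulus K γ δ hγ hγδ,
      Submodule.span K
          {(Submodule.Quotient.mk ⟨fun n : ℤ => if n = -1 then (1 : K) else 0, he⟩ :
            DaggerAnnulus K γ δ hγ hγδ ⧸
              Submodule.comap (DaggerAnnulus K γ δ hγ hγδ).subtype
                (Submodule.map (DerZ K) (DaggerAnnulus K γ δ hγ hγδ)))} = ⊤ ∧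
      Module.finrank K
          (DaggerAnnulus K γ δ hγ hγδ ⧸
            Submodule.comap (DaggerAnnulus K γ δ hγ hγδ).subtype
              (Submodule.map (DerZ K) (DaggerAnnulus K γ δ hγ hγδ))) = 1 := by
  set W := DaggerAnnulus K γ δ hγ hγδ
  have hrange : ∀ a ∈ W, (∃ b ∈ W, DerZ K b = a) ↔ a (-1) = 0 := fun a ha =>
    ⟨by rintro ⟨b, -, rfl⟩; exact derZ_apply_neg_one b,
      fun h => ⟨antiderivZ a, antiderivZ_mem_daggerAnnulus ha, derZ_antiderivZ h⟩⟩
  have he : (fun n : ℤ => if n = -1 then (1 : K) else 0) ∈ W :=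
    mem_daggerAnnulus_of_eventually_eq_zero <|
      (eventually_cofinite_ne (-1)).mono fun _ hn => if_neg hn
  let residue : W →ₗ[K] K := (LinearMap.proj (-1)).comp W.subtype
  have hker : Submodule.comap W.subtype (Submodule.map (DerZ K) W) = LinearMap.ker residue := by
    ext ⟨a, ha⟩
    simpa [residue] using hrange a ha
  have hresidue : residue ⟨_, he⟩ ≠ 0 := by simp [residue]
  refine ⟨fun a => derZ_mem_daggerAnnulus, hrange, he, ?_⟩
  rw [hker]
  exact ⟨span_singleton_mk_eq_top_of_ker hresidue, finrank_quotient_ker_eq_one hresidue⟩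
end

section
/- With O as in the context (overconvergent functions on a closed polyannulus with product condition), fix l < n. If a ∈ O, then the function b : Λ → K defined by b v = a v / ((v l : ℤ) : K) when v l ≠ 0 and b v = 0 when v l = 0, again lies in O. (Formal integration in the l-th variable preserves the overconvergent coefficient module; this is claim (i) in the proof of the paper's Lemma 2.1, stated there for series with coefficients in a dagger algebra.) -/
open Filter Topology

/-- Laurent exponents for `n` variables, negative only in the first `r` variables. -/
abbrev LaurentExp (n r : ℕ) : Type :=
  {v : Fin n → ℤ // ∀ i : Fin n, r ≤ (i : ℕ) → 0 ≤ v i}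

/-- The compact region `R(γ', δ', μ')` of radii: `0 < t i ≤ δ' i` for all `i`, `γ' i ≤ t i` for
`i < r`, and `μ' ≤ ∏_{i<r} t i`. -/
def polyRegion (n r : ℕ) (γ' δ' : Fin n → ℝ) (μ' : ℝ) : Set (Fin n → ℝ) :=
  {t | (∀ i, 0 < t i ∧ t i ≤ δ' i) ∧ (∀ i : Fin n, (i : ℕ) < r → γ' i ≤ t i) ∧
    μ' ≤ ∏ i ∈ Finset.univ.filter (fun i : Fin n => (i : ℕ) < r), t i}

/-- The weight `S_{γ',δ',μ'}(v) = ⨆_{t ∈ R(γ',δ',μ')} ∏ i (t i)^(v i)`. -/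
noncomputable def polyWeight (n r : ℕ) (γ' δ' : Fin n → ℝ) (μ' : ℝ) (v : Fin n → ℤ) : ℝ :=
  ⨆ t ∈ polyRegion n r γ' δ' μ', ∏ i, t i ^ v i

/-- The coefficient model `O` of the ring of overconvergent (dagger) functions on the closed
polyannulus `V = {x | ∏_{i<r} |x i| ≥ μ, |x i| ≤ δ i for all i, |x i| ≥ γ i for i < r}`:
functions `a : Λ → K` having overconvergent decay `‖a v‖ · S_{γ',δ',μ'}(v) → 0` along the
cofinite filter, for some admissible larger parameter system `(γ', δ', μ')`. -/
def OverconvergentO (K : Type*) [NormedField K] (n r : ℕ) (γ δ : Fin n → ℝ) (μ : ℝ) :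
    Set (LaurentExp n r → K) :=
  {a | ∃ γ' δ' : Fin n → ℝ, ∃ μ' : ℝ,
    (∀ i : Fin n, (i : ℕ) < r → 0 < γ' i ∧ γ' i < γ i ∧ γ' i ≤ δ' i) ∧
    (∀ i, δ i < δ' i) ∧ 0 < μ' ∧ μ' < μ ∧
    Tendsto (fun v : LaurentExp n r => ‖a v‖ * polyWeight n r γ' δ' μ' v.1)
      cofinite (𝓝 0)}

/-!
Shrink the parameter system `(γ', δ', μ')` witnessing `a ∈ O` by a factor `c > 1`, to
`(c γ', δ' / c, c μ')`. Multiplying the `l`-th coordinate of a point of the new region by `c`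
(if `v l ≥ 0`) or by `c⁻¹` (if `v l < 0`, so `l < r`) lands in the old region, so the new weight
is at most `c^(-|v l|)` times the old one. Dividing by `v l` costs only a polynomial factor
`‖v l‖⁻¹ ≤ |v l|^s`, which the geometric gain absorbs.
-/

section NormGrowth

variable (K : Type*) [NormedField K] [IsUltrametricDist K] [CharZero K]

/-- By Ostrowski, `‖·‖` restricted to `ℚ` is trivial or a power `|·|_p ^ s` of a `p`-adic norm,
and `|m|_p ≥ 1 / m`. -/
lemma exists_norm_natCast_inv_le_rpow :
    ∃ s : ℝ, ∀ m : ℕ, m ≠ 0 → ‖(m : K)‖⁻¹ ≤ (m : ℝ) ^ s := by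
  let f : AbsoluteValue ℚ ℝ :=
    (NormedField.toAbsoluteValue K).comp (Rat.castHom K).injective
  have hf (q : ℚ) : f q = ‖(q : K)‖ := rfl
  by_cases hnt : f.IsNontrivial
  · obtain ⟨p, ⟨hp, hequiv⟩, -⟩ := Rat.AbsoluteValue.equiv_padic_of_bounded hnt
      fun m => by simpa [hf] using IsUltrametricDist.norm_natCast_le_one K m
    obtain ⟨c, hc, hfc⟩ := AbsoluteValue.isEquiv_iff_exists_rpow_eq.mp hequiv
    refine ⟨c⁻¹, fun m hm => ?_⟩
    have hpadic : (m : ℝ)⁻¹ ≤ ‖(m : K)‖ ^ c := by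
      have := congrFun hfc m
      simp only [hf, Rat.cast_natCast, Rat.AbsoluteValue.padic_eq_padicNorm] at this
      rw [this, padicNorm.eq_zpow_of_nonzero (by exact_mod_cast hm), padicValRat.of_nat,
        zpow_neg, zpow_natCast]
      push_cast
      exact inv_anti₀ (by have := hp.out.pos; positivity)
        (by exact_mod_cast Nat.le_of_dvd (Nat.pos_of_ne_zero hm) pow_padicValNat_dvd)
    have hnorm : 0 < ‖(m : K)‖ := norm_pos_iff.mpr (Nat.cast_ne_zero.mpr hm)
    calc ‖(m : K)‖⁻¹ = ((‖(m : K)‖ ^ c)⁻¹) ^ c⁻¹ := by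
          rw [Real.inv_rpow (by positivity), ← Real.rpow_mul hnorm.le, mul_inv_cancel₀ hc.ne',
            Real.rpow_one]
      _ ≤ ((m : ℝ)⁻¹)⁻¹ ^ c⁻¹ := by gcongr
      _ = (m : ℝ) ^ c⁻¹ := by rw [inv_inv]
  · refine ⟨0, fun m hm => ?_⟩
    have : ‖(m : K)‖ = 1 := by
      by_contra h
      exact hnt ⟨m, by exact_mod_cast hm, by simpa [hf] using h⟩
    simp [this]

lemma exists_norm_intCast_inv_mul_pow_le {ρ : ℝ} (hρ₀ : 0 ≤ ρ) (hρ₁ : ρ < 1) :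
    ∃ C : ℝ, 0 ≤ C ∧ ∀ m : ℤ, m ≠ 0 → ‖(m : K)‖⁻¹ * ρ ^ m.natAbs ≤ C := by
  obtain ⟨s, hs⟩ := exists_norm_natCast_inv_le_rpow K
  obtain ⟨C, hC⟩ := (tendsto_pow_const_mul_const_pow_of_lt_one ⌈s⌉₊ hρ₀ hρ₁).bddAbove_range
  refine ⟨max C 0, le_max_right _ _, fun m hm => ?_⟩
  have hk : (1 : ℝ) ≤ m.natAbs := by exact_mod_cast Nat.one_le_iff_ne_zero.mpr (by omega)
  calc ‖(m : K)‖⁻¹ * ρ ^ m.natAbs = ‖(m.natAbs : K)‖⁻¹ * ρ ^ m.natAbs := by rw [norm_natAbs]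
    _ ≤ (m.natAbs : ℝ) ^ s * ρ ^ m.natAbs := by gcongr; exact hs _ (by omega)
    _ ≤ (m.natAbs : ℝ) ^ ⌈s⌉₊ * ρ ^ m.natAbs := by
        gcongr
        rw [← Real.rpow_natCast]
        exact Real.rpow_le_rpow_of_exponent_le hk (Nat.le_ceil s)
    _ ≤ max C 0 := (hC ⟨m.natAbs, rfl⟩).trans (le_max_left _ _)

end NormGrowth

lemma Finset.prod_update_mul_self {ι M : Type*} [CommMonoid M] [DecidableEq ι] {s : Finset ι}
    {i : ι} (hi : i ∈ s) (f : ι → M) (c : M) :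
    ∏ k ∈ s, Function.update f i (c * f i) k = c * ∏ k ∈ s, f k := by
  rw [Finset.prod_update_of_mem hi, Finset.prod_eq_mul_prod_sdiff_singleton i f (absurd hi),
    mul_assoc]

lemma prod_zpow_update_mul_self {ι G : Type*} [Fintype ι] [DecidableEq ι] [DivisionCommMonoid G]
    (t : ι → G) (v : ι → ℤ) (i : ι) (c : G) :
    ∏ k, Function.update t i (c * t i) k ^ v k = c ^ v i * ∏ k, t k ^ v k := by
  have h : (fun k => Function.update t i (c * t i) k ^ v k) =
      Function.update (fun k => t k ^ v k) i (c ^ v i * t i ^ v i) := by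
    ext k
    rcases eq_or_ne k i with rfl | hk
    · simp [mul_zpow]
    · simp [hk]
  rw [h, Finset.prod_update_mul_self (Finset.mem_univ i)]

section polyWeight

variable {n r : ℕ} {γ δ : Fin n → ℝ} {μ c : ℝ} {t : Fin n → ℝ}

lemma LaurentExp.lt_of_apply_neg (v : LaurentExp n r) {i : Fin n} (h : v.1 i < 0) :
    (i : ℕ) < r :=
  lt_of_not_ge fun hi => (v.2 i hi).not_gt h

lemma polyWeight_nonneg (v : Fin n → ℤ) : 0 ≤ polyWeight n r γ δ μ v :=
  Real.iSup_nonneg fun _ => Real.iSup_nonneg fun ht =>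
    Finset.prod_nonneg fun i _ => zpow_nonneg (ht.1 i).1.le _

lemma polyWeight_le {v : Fin n → ℤ} {M : ℝ} (hM : 0 ≤ M)
    (h : ∀ t ∈ polyRegion n r γ δ μ, ∏ i, t i ^ v i ≤ M) : polyWeight n r γ δ μ v ≤ M :=
  Real.iSup_le (fun t => Real.iSup_le (h t) hM) hM

lemma prod_zpow_le_of_mem_polyRegion (hγ : ∀ i : Fin n, (i : ℕ) < r → 0 < γ i)
    (v : LaurentExp n r) (ht : t ∈ polyRegion n r γ δ μ) :
    ∏ i, t i ^ v.1 i ≤ ∏ i, max (γ i ^ v.1 i) (δ i ^ v.1 i) := by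
  refine Finset.prod_le_prod (fun i _ => zpow_nonneg (ht.1 i).1.le _) fun i _ => ?_
  rcases le_or_gt 0 (v.1 i) with hvi | hvi
  · exact le_max_of_le_right (zpow_le_zpow_left₀ hvi (ht.1 i).1.le (ht.1 i).2)
  · have hir := v.lt_of_apply_neg hvi
    refine le_max_of_le_left ?_
    rw [← inv_inv (t i), ← inv_inv (γ i), inv_zpow' (t i)⁻¹, inv_zpow' (γ i)⁻¹]
    exact zpow_le_zpow_left₀ (by omega) (inv_nonneg.mpr (ht.1 i).1.le)
      (inv_anti₀ (hγ i hir) (ht.2.1 i hir))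

lemma prod_zpow_le_polyWeight (hγ : ∀ i : Fin n, (i : ℕ) < r → 0 < γ i) (v : LaurentExp n r)
    (ht : t ∈ polyRegion n r γ δ μ) : ∏ i, t i ^ v.1 i ≤ polyWeight n r γ δ μ v.1 := by
  have hbound := prod_zpow_le_of_mem_polyRegion hγ v ht
  have hbdd : BddAbove (Set.range fun s => ⨆ _ : s ∈ polyRegion n r γ δ μ, ∏ i, s i ^ v.1 i) := by
    refine ⟨_, Set.forall_mem_range.mpr fun s => Real.iSup_le
      (fun hs => prod_zpow_le_of_mem_polyRegion hγ v hs) ?_⟩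
    exact (Finset.prod_nonneg fun i _ => zpow_nonneg (ht.1 i).1.le _).trans hbound
  exact (le_ciSup_of_le hbdd t (ciSup_pos (f := fun _ => ∏ i, t i ^ v.1 i) ht).ge)

lemma update_mul_mem_polyRegion (hc : 1 ≤ c) (hγ : ∀ i : Fin n, (i : ℕ) < r → 0 ≤ γ i)
    (hμ : 0 ≤ μ) (ht : t ∈ polyRegion n r (c • γ) (c⁻¹ • δ) (c * μ)) (l : Fin n) :
    Function.update t l (c * t l) ∈ polyRegion n r γ δ μ := by
  obtain ⟨hbox, hlow, hprod⟩ := ht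
  simp only [Pi.smul_apply, smul_eq_mul] at hbox hlow
  have hc0 : 0 < c := zero_lt_one.trans_le hc
  have hmul_le i : c * t i ≤ δ i := (le_inv_mul_iff₀ hc0).mp (hbox i).2
  have hle_mul i : t i ≤ c * t i := le_mul_of_one_le_left (hbox i).1.le hc
  have hγ_le (i : Fin n) (hi : (i : ℕ) < r) : γ i ≤ t i :=
    (le_mul_of_one_le_left (hγ i hi) hc).trans (hlow i hi)
  refine ⟨fun i => ?_, fun i hi => ?_, ?_⟩
  · rcases eq_or_ne i l with rfl | hil
    · simpa using ⟨mul_pos hc0 (hbox i).1, hmul_le i⟩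
    · simpa [hil] using ⟨(hbox i).1, (hle_mul i).trans (hmul_le i)⟩
  · rcases eq_or_ne i l with rfl | hil
    · simpa using (hγ_le i hi).trans (hle_mul i)
    · simpa [hil] using hγ_le i hi
  · have hprod_nonneg : 0 ≤ ∏ i ∈ Finset.univ.filter (fun i : Fin n => (i : ℕ) < r), t i :=
      Finset.prod_nonneg fun i _ => (hbox i).1.le
    have hμ_le := (le_mul_of_one_le_left hμ hc).trans hprod
    by_cases hl : l ∈ Finset.univ.filter (fun i : Fin n => (i : ℕ) < r)
    · rw [Finset.prod_update_mul_self hl]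
      exact hμ_le.trans (le_mul_of_one_le_left hprod_nonneg hc)
    · rwa [Finset.prod_update_of_notMem hl]

lemma update_inv_mul_mem_polyRegion (hc : 1 ≤ c) (hγ : ∀ i : Fin n, (i : ℕ) < r → 0 ≤ γ i)
    (ht : t ∈ polyRegion n r (c • γ) (c⁻¹ • δ) (c * μ)) {l : Fin n} (hl : (l : ℕ) < r) :
    Function.update t l (c⁻¹ * t l) ∈ polyRegion n r γ δ μ := by
  obtain ⟨hbox, hlow, hprod⟩ := ht
  simp only [Pi.smul_apply, smul_eq_mul] at hbox hlow
  have hc0 : 0 < c := zero_lt_one.trans_le hc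
  have hinv_mul_le i : c⁻¹ * t i ≤ t i := inv_mul_le_of_le_mul₀ hc0.le (hbox i).1.le
    (le_mul_of_one_le_left (hbox i).1.le hc)
  have hle_δ i : t i ≤ δ i := (le_mul_of_one_le_left (hbox i).1.le hc).trans
    ((le_inv_mul_iff₀ hc0).mp (hbox i).2)
  refine ⟨fun i => ?_, fun i hi => ?_, ?_⟩
  · rcases eq_or_ne i l with rfl | hil
    · simpa using ⟨mul_pos (inv_pos.mpr hc0) (hbox i).1, (hinv_mul_le i).trans (hle_δ i)⟩
    · simpa [hil] using ⟨(hbox i).1, hle_δ i⟩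
  · rcases eq_or_ne i l with rfl | hil
    · simpa using (le_inv_mul_iff₀ hc0).mpr (hlow i hi)
    · simpa [hil] using (le_mul_of_one_le_left (hγ i hi) hc).trans (hlow i hi)
  · rw [Finset.prod_update_mul_self (Finset.mem_filter.mpr ⟨Finset.mem_univ l, hl⟩)]
    exact (le_inv_mul_iff₀ hc0).mpr hprod

lemma polyWeight_smul_le (hc : 1 ≤ c) (hγ : ∀ i : Fin n, (i : ℕ) < r → 0 < γ i) (hμ : 0 ≤ μ)
    (v : LaurentExp n r) (l : Fin n) :
    polyWeight n r (c • γ) (c⁻¹ • δ) (c * μ) v.1 ≤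
      c⁻¹ ^ (v.1 l).natAbs * polyWeight n r γ δ μ v.1 := by
  have hc0 : 0 < c := zero_lt_one.trans_le hc
  have hγ₀ i hi := (hγ i hi).le
  refine polyWeight_le (mul_nonneg (by positivity) (polyWeight_nonneg _)) fun t ht => ?_
  rw [inv_pow, ← div_eq_inv_mul, le_div_iff₀' (by positivity)]
  rcases le_or_gt 0 (v.1 l) with hvl | hvl
  · have h := prod_zpow_le_polyWeight hγ v (update_mul_mem_polyRegion hc hγ₀ hμ ht l)
    rwa [prod_zpow_update_mul_self, ← Int.natAbs_of_nonneg hvl, zpow_natCast] at h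
  · have h := prod_zpow_le_polyWeight hγ v
      (update_inv_mul_mem_polyRegion hc hγ₀ ht (v.lt_of_apply_neg hvl))
    rwa [prod_zpow_update_mul_self, inv_zpow', ← Int.ofNat_natAbs_of_nonpos hvl.le,
      zpow_natCast] at h

end polyWeight

lemma exists_one_lt_scale {n r : ℕ} {γ γ' δ δ' : Fin n → ℝ} {μ μ' : ℝ}
    (hγ : ∀ i : Fin n, (i : ℕ) < r → γ' i < γ i) (hδ : ∀ i, δ i < δ' i) (hμ : μ' < μ) :
    ∃ c, 1 < c ∧ (∀ i : Fin n, (i : ℕ) < r → c * γ' i < γ i) ∧ (∀ i, c * δ i < δ' i) ∧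
      c * μ' < μ := by
  have hlt {x y : ℝ} (h : x < y) : ∀ᶠ c in 𝓝 (1 : ℝ), c * x < y :=
    ((continuous_mul_const x).tendsto' 1 x (one_mul x)).eventually_lt_const h
  have h := (Filter.eventually_all.mpr fun i => Filter.eventually_imp_distrib_left.mpr
    fun hi => hlt (hγ i hi)).and ((Filter.eventually_all.mpr fun i => hlt (hδ i)).and (hlt hμ))
  obtain ⟨c, hc, hc1⟩ := ((eventually_nhdsWithin_of_eventually_nhds h).and
    (self_mem_nhdsWithin (s := Set.Ioi 1))).exists
  exact ⟨c, hc1, hc⟩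

theorem formal_integration_mem_overconvergentO_general
    (K : Type*) [NormedField K] [IsUltrametricDist K] [CharZero K]
    (n r : ℕ) (γ δ : Fin n → ℝ) (μ : ℝ)
    (hγδ : ∀ i : Fin n, (i : ℕ) < r → 0 < γ i ∧ γ i ≤ δ i)
    (l : Fin n) (a : LaurentExp n r → K) (ha : a ∈ OverconvergentO K n r γ δ μ) :
    (fun v : LaurentExp n r => if v.1 l = 0 then 0 else a v / ((v.1 l : ℤ) : K)) ∈
      OverconvergentO K n r γ δ μ := by
  obtain ⟨γ', δ', μ', hγ', hδ', hμ'₀, hμ'μ, hdecay⟩ := ha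
  obtain ⟨c, hc, hcγ, hcδ, hcμ⟩ :=
    exists_one_lt_scale (fun i hi => (hγ' i hi).2.1) hδ' hμ'μ
  obtain ⟨C, hC₀, hC⟩ := exists_norm_intCast_inv_mul_pow_le K (inv_pos.mpr
    (zero_lt_one.trans hc)).le (inv_lt_one_of_one_lt₀ hc)
  have hcδ' i : δ i < c⁻¹ * δ' i := (lt_inv_mul_iff₀ (zero_lt_one.trans hc)).mpr (hcδ i)
  refine ⟨c • γ', c⁻¹ • δ', c * μ', fun i hi => ⟨?_, hcγ i hi, ?_⟩, hcδ', by positivity, hcμ, ?_⟩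
  · exact mul_pos (zero_lt_one.trans hc) (hγ' i hi).1
  · exact (hcγ i hi).le.trans ((hγδ i hi).2.trans (hcδ' i).le)
  have hweight := polyWeight_smul_le (δ := δ') hc.le (fun i hi => (hγ' i hi).1) hμ'₀.le
  refine squeeze_zero (fun v => mul_nonneg (norm_nonneg _) (polyWeight_nonneg _)) (fun v => ?_)
    (by simpa using hdecay.const_mul C)
  dsimp only
  split_ifs with hv
  · simpa using mul_nonneg hC₀ (mul_nonneg (norm_nonneg _) (polyWeight_nonneg _))
  calc ‖a v / ((v.1 l : ℤ) : K)‖ * polyWeight n r (c • γ') (c⁻¹ • δ') (c * μ') v.1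
      ≤ ‖a v‖ * ‖((v.1 l : ℤ) : K)‖⁻¹ * (c⁻¹ ^ (v.1 l).natAbs * polyWeight n r γ' δ' μ' v.1) := by
        rw [norm_div, div_eq_mul_inv]
        gcongr
        exact hweight v l
    _ = (‖((v.1 l : ℤ) : K)‖⁻¹ * c⁻¹ ^ (v.1 l).natAbs) * (‖a v‖ * polyWeight n r γ' δ' μ' v.1) := by
        ring
    _ ≤ C * (‖a v‖ * polyWeight n r γ' δ' μ' v.1) :=
        mul_le_mul_of_nonneg_right (hC _ hv) (mul_nonneg (norm_nonneg _) (polyWeight_nonneg _))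

/-- **Formal integration in the `l`-th variable preserves the overconvergent coefficient module**
(claim (i) in the proof of Lemma 2.1 of the paper): if `a ∈ O`, then the function `b` with
`b v = a v / v l` when `v l ≠ 0` and `b v = 0` when `v l = 0` again lies in `O`. -/
theorem formal_integration_mem_overconvergentO
    (K : Type*) [NormedField K] [IsUltrametricDist K] [CharZero K]
    (n r : ℕ) (hrn : r ≤ n) (γ δ : Fin n → ℝ) (μ : ℝ)
    (hγδ : ∀ i : Fin n, (i : ℕ) < r → 0 < γ i ∧ γ i ≤ δ i)
    (hδ : ∀ i, 0 < δ i) (hμ : 0 < μ)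
    (hμδ : μ ≤ ∏ i ∈ Finset.univ.filter (fun i : Fin n => (i : ℕ) < r), δ i)
    (l : Fin n) (a : LaurentExp n r → K) (ha : a ∈ OverconvergentO K n r γ δ μ) :
    (fun v : LaurentExp n r => if v.1 l = 0 then 0 else a v / ((v.1 l : ℤ) : K)) ∈
      OverconvergentO K n r γ δ μ :=
  formal_integration_mem_overconvergentO_general K n r γ δ μ hγδ l a ha
end
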